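/- arXiv:2311.15020 — 2 statements merged into one kernel-verified Lean document; each statement's English description precedes it below -/
import Mathlib

section
/- Let A = (Q, Σ, δ) be a PFA that is one-cluster with respect to a letter a, let C be the vertex set of the a-cycle, and suppose that a is the only letter of Σ defined at every state (i.e., for every letter x ≠ a there is a state q with δ(q, x) undefined). If A is carefully synchronizing and |C| > 1, then there exists a letter b ∈ Σ with b ≠ a such that δ(q, b) is defined for every q ∈ C. -/
namespace PaperSync

variable {Q A : Type*}

/-- The extension of a partial transition function `δ : Q → A → Option Q` to words. -/
def wordMap (δ : Q → A → Option Q) : Q → List A → Option Q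
  | q, [] => some q
  | q, x :: w => (δ q x).bind fun q' => wordMap δ q' w

/-- A word `w` carefully synchronizes the PFA `δ`:
`δ(q, w)` is defined for every state and all values agree. -/
def CarefullySync (δ : Q → A → Option Q) (w : List A) : Prop :=
  ∃ qbar : Q, ∀ q : Q, wordMap δ q w = some qbar

open Classical in
/-- The image of a set of states under a word: defined iff `δ(q,w)` is defined
for all `q ∈ S`, in which case it is `{δ(q,w) : q ∈ S}`. -/
noncomputable def setImage (δ : Q → A → Option Q) (S : Set Q) (w : List A) :
    Option (Set Q) :=
  if ∀ q ∈ S, (wordMap δ q w).isSome then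
    some {q' | ∃ q ∈ S, wordMap δ q w = some q'}
  else none

/-- A PFA is one-cluster with respect to a letter `a`: `a` is defined at every
state and the functional digraph `G_a` of `a` has exactly one weakly connected
component. -/
def OneCluster (δ : Q → A → Option Q) (a : A) : Prop :=
  (∀ q : Q, (δ q a).isSome) ∧
  ∀ p q : Q, Relation.EqvGen (fun u v => δ u a = some v) p q

/-- The vertex set of the `a`-cycle: states returning to themselves under some
positive power of `a`. -/
def cycleSet (δ : Q → A → Option Q) (a : A) : Set Q :=
  {q | ∃ k : ℕ, 1 ≤ k ∧ wordMap δ q (List.replicate k a) = some q}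

/-- The level of a state: the least `k` with `δ(q, a^k)` on the `a`-cycle. -/
noncomputable def levelOf (δ : Q → A → Option Q) (a : A) (q : Q) : ℕ :=
  sInf {k | ∃ p ∈ cycleSet δ a, wordMap δ q (List.replicate k a) = some p}

/-- The level of `G_a`: the maximal level of a state. -/
noncomputable def levelG [Fintype Q] (δ : Q → A → Option Q) (a : A) : ℕ :=
  Finset.univ.sup (levelOf δ a)

/-! A carefully synchronizing word must leave the `a`-cycle `C`, since `a` permutes `C` and
`|C| > 1`. Before its first letter `b ≠ a` the word has only applied some `a^m`, which maps `C`
onto `C`; so `b` is applied to every state of `C` and must be defined there. -/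

lemma wordMap_append (δ : Q → A → Option Q) (q : Q) (u v : List A) :
    wordMap δ q (u ++ v) = (wordMap δ q u).bind fun p => wordMap δ p v := by
  induction u generalizing q with
  | nil => rfl
  | cons x u ih =>
    simp only [List.cons_append, wordMap]
    cases δ q x <;> simp [ih]

lemma isSome_of_wordMap_append_cons_eq_some {δ : Q → A → Option Q} {q p r : Q} {u w : List A}
    {b : A} (hu : wordMap δ q u = some p) (h : wordMap δ q (u ++ b :: w) = some r) :
    (δ p b).isSome := by
  rw [wordMap_append, hu, Option.bind_some, wordMap] at h
  obtain ⟨p', hp', -⟩ := Option.bind_eq_some_iff.mp h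
  simp [hp']

lemma List.eq_replicate_or_eq_replicate_append_cons_ne {α : Type*} (a : α) (w : List α) :
    (∃ m, w = List.replicate m a) ∨
      ∃ m b w', b ≠ a ∧ w = List.replicate m a ++ b :: w' := by
  induction w with
  | nil => exact .inl ⟨0, rfl⟩
  | cons x w ih =>
    by_cases hx : x = a
    · subst hx
      rcases ih with ⟨m, rfl⟩ | ⟨m, b, w', hb, rfl⟩
      · exact .inl ⟨m + 1, rfl⟩
      · exact .inr ⟨m + 1, b, w', hb, rfl⟩
    · exact .inr ⟨0, x, w, hx, rfl⟩

section cycleSet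

variable {δ : Q → A → Option Q} {a : A}

lemma wordMap_replicate_succ (q : Q) (k : ℕ) :
    wordMap δ q (List.replicate (k + 1) a) =
      (δ q a).bind fun p => wordMap δ p (List.replicate k a) :=
  rfl

lemma mem_cycleSet_of_step {q q' : Q} (hq : q ∈ cycleSet δ a) (h : δ q a = some q') :
    q' ∈ cycleSet δ a := by
  obtain ⟨k, hk, hqk⟩ := hq
  refine ⟨k, hk, ?_⟩
  have hq' : wordMap δ q (List.replicate (k + 1) a) = some q' := by
    rw [List.replicate_succ', wordMap_append, hqk]
    simp [wordMap, h]
  rwa [wordMap_replicate_succ, h, Option.bind_some] at hq'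

lemma mem_cycleSet_of_wordMap_replicate {m : ℕ} {q p : Q} (hq : q ∈ cycleSet δ a)
    (h : wordMap δ q (List.replicate m a) = some p) : p ∈ cycleSet δ a := by
  induction m generalizing q with
  | zero => exact Option.some_inj.mp h ▸ hq
  | succ m ih =>
    obtain ⟨q', hq', h'⟩ := Option.bind_eq_some_iff.mp h
    exact ih (mem_cycleSet_of_step hq hq') h'

lemma exists_mem_cycleSet_step_eq {q : Q} (hq : q ∈ cycleSet δ a) :
    ∃ p ∈ cycleSet δ a, δ p a = some q := by
  have ⟨k, hk, hqk⟩ := hq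
  obtain ⟨k, rfl⟩ := Nat.exists_eq_add_of_le' hk
  rw [List.replicate_succ', wordMap_append] at hqk
  obtain ⟨p, hp, hpq⟩ := Option.bind_eq_some_iff.mp hqk
  exact ⟨p, mem_cycleSet_of_wordMap_replicate hq hp, by simpa [wordMap] using hpq⟩

lemma exists_mem_cycleSet_wordMap_replicate_eq (m : ℕ) {q : Q} (hq : q ∈ cycleSet δ a) :
    ∃ p ∈ cycleSet δ a, wordMap δ p (List.replicate m a) = some q := by
  induction m generalizing q with
  | zero => exact ⟨q, hq, rfl⟩
  | succ m ih =>
    obtain ⟨p, hp, hpq⟩ := exists_mem_cycleSet_step_eq hq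
    obtain ⟨r, hr, hrp⟩ := ih hp
    exact ⟨r, hr, by rw [List.replicate_succ', wordMap_append, hrp]; simpa [wordMap] using hpq⟩

end cycleSet

theorem cluster_letter_defined_general
    {Q A : Type*} (δ : Q → A → Option Q) (a : A)
    (hsync : ∃ w : List A, CarefullySync δ w)
    (hC : 1 < (cycleSet δ a).ncard) :
    ∃ b : A, b ≠ a ∧ ∀ q ∈ cycleSet δ a, (δ q b).isSome := by
  obtain ⟨w, qbar, hw⟩ := hsync
  rcases List.eq_replicate_or_eq_replicate_append_cons_ne a w with
    ⟨m, rfl⟩ | ⟨m, b, w', hb, rfl⟩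
  · have hsub : cycleSet δ a ⊆ {qbar} := fun q hq => by
      obtain ⟨p, -, hpq⟩ := exists_mem_cycleSet_wordMap_replicate_eq m hq
      exact Option.some_inj.mp (hpq.symm.trans (hw p))
    have := (Set.ncard_le_ncard hsub).trans_eq (Set.ncard_singleton qbar)
    omega
  · refine ⟨b, hb, fun p hp => ?_⟩
    obtain ⟨q, -, hqp⟩ := exists_mem_cycleSet_wordMap_replicate_eq m hp
    exact isSome_of_wordMap_append_cons_eq_some hqp (hw q)

/-- if a one-cluster PFA, whose cluster letter `a` is the only
letter defined at every state, is carefully synchronizing and its `a`-cycle `C`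
has more than one state, then some letter `b ≠ a` is defined at every state of
`C`. -/
theorem cluster_letter_defined
    {Q A : Type*} [Fintype Q] [Fintype A] (δ : Q → A → Option Q) (a : A)
    (hcluster : OneCluster δ a)
    (honly : ∀ x : A, x ≠ a → ∃ q : Q, δ q x = none)
    (hsync : ∃ w : List A, CarefullySync δ w)
    (hC : 1 < (cycleSet δ a).ncard) :
    ∃ b : A, b ≠ a ∧ ∀ q ∈ cycleSet δ a, (δ q b).isSome :=
  cluster_letter_defined_general δ a hsync hC

end PaperSync
end

section
/- For every k ≥ 1 and every set S ∈ 𝒯_k, we have δ_k(S, a) = C_k and |S| = k = n/2. -/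
namespace PaperSync

variable {Q A : Type*}

/-- The state set `Q_k = C_k ∪ T_k`: `Sum.inl i` is the cycle state `c_{i+1}`,
`Sum.inr i` is the tail state `t_{i+1}`. -/
abbrev Qk (k : ℕ) := Fin k ⊕ Fin k

/-- The action of the letter `a`: `c_i ↦ c_{i+1 (mod k)}`, `t_i ↦ c_i`. -/
def aMap (k : ℕ) : Qk k → Qk k
  | Sum.inl i => Sum.inl ⟨(i.val + 1) % k, Nat.mod_lt _ i.pos⟩
  | Sum.inr i => Sum.inl i

/-- The set `C_k` of cycle states. -/
def Ck (k : ℕ) : Finset (Qk k) := Finset.univ.image Sum.inl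

/-- The set `T_k` of tail states. -/
def Tk (k : ℕ) : Finset (Qk k) := Finset.univ.image Sum.inr

/-- For `T ⊆ T_k`, the set `T ∪ (C_k ∩ ((T_k \ T).a).a⁻¹)`. -/
def famElem (k : ℕ) (T : Finset (Qk k)) : Finset (Qk k) :=
  T ∪ (Ck k).filter fun q => aMap k q ∈ ((Tk k) \ T).image (aMap k)

/-- The family `𝒯_k`, indexed by the nonempty subsets of `T_k`. -/
def Tfam (k : ℕ) : Finset (Finset (Qk k)) :=
  (((Tk k).powerset).erase ∅).image (famElem k)
lemma aMap_inl (k : ℕ) [NeZero k] (j : Fin k) :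
    aMap k (Sum.inl j) = Sum.inl (j + 1) := by
  simp only [aMap, Sum.inl.injEq]
  ext
  simp [Fin.add_def, Fin.val_one', Nat.add_mod, Nat.mod_mod_of_dvd,
    Nat.mod_eq_of_lt j.isLt]

lemma mem_aImage (k : ℕ) [NeZero k] (T : Finset (Qk k)) (m : Fin k) :
    Sum.inl m ∈ ((Tk k) \ T).image (aMap k) ↔ Sum.inr m ∉ T := by
  constructor
  · rintro h
    obtain ⟨x, hx, heq⟩ := Finset.mem_image.mp h
    rcases x with j | i
    · have : Sum.inl j ∈ Tk k := (Finset.mem_sdiff.mp hx).1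
      simp [Tk] at this
    · have : Sum.inl i = Sum.inl m := heq
      obtain rfl : i = m := by simpa using this
      exact (Finset.mem_sdiff.mp hx).2
  · intro h
    exact Finset.mem_image.mpr ⟨Sum.inr m, Finset.mem_sdiff.mpr ⟨by simp [Tk], h⟩, rfl⟩

lemma mem_famElem_inl (k : ℕ) [NeZero k] (T : Finset (Qk k)) (hT : T ⊆ Tk k) (j : Fin k) :
    Sum.inl j ∈ famElem k T ↔ Sum.inr (j + 1) ∉ T := by
  have hnotT : Sum.inl j ∉ T := fun h => by simpa [Tk] using hT h
  simp only [famElem, Finset.mem_union, Finset.mem_filter, hnotT, false_or]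
  rw [aMap_inl, mem_aImage]
  simp [Ck]

lemma mem_famElem_inr (k : ℕ) (T : Finset (Qk k)) (i : Fin k) :
    Sum.inr i ∈ famElem k T ↔ Sum.inr i ∈ T := by
  simp [famElem, Ck]

/-- every `S ∈ 𝒯_k` satisfies `δ_k(S, a) = C_k` and
`|S| = k = n/2` (where `n = 2k = |Q_k|`). -/
theorem Tfam_image_and_card (k : ℕ) (hk : 1 ≤ k)
    (S : Finset (Qk k)) (hS : S ∈ Tfam k) :
    S.image (aMap k) = Ck k ∧ S.card = k ∧ S.card = Fintype.card (Qk k) / 2 := by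
  haveI : NeZero k := ⟨by omega⟩
  obtain ⟨T, hT', rfl⟩ := Finset.mem_image.mp hS
  have hT : T ⊆ Tk k := Finset.mem_powerset.mp (Finset.mem_of_mem_erase hT')
  have himg : (famElem k T).image (aMap k) = Ck k := by
    ext q
    rcases q with m | m
    · simp only [Ck, Finset.mem_image]
      constructor
      · intro _; exact ⟨m, Finset.mem_univ m, rfl⟩
      · intro _
        by_cases h : Sum.inr m ∈ T
        · exact ⟨Sum.inr m, (mem_famElem_inr k T m).mpr h, rfl⟩
        · refine ⟨Sum.inl (m - 1), ?_, ?_⟩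
          · rw [mem_famElem_inl k T hT, sub_add_cancel]; exact h
          · rw [aMap_inl, sub_add_cancel]
    · constructor
      · intro h
        obtain ⟨x, _, heq⟩ := Finset.mem_image.mp h
        rcases x with j | i
        · rw [aMap_inl] at heq; exact absurd heq (by simp)
        · exact absurd heq (by simp [aMap])
      · intro h; simp [Ck] at h
  have hinj : Set.InjOn (aMap k) (famElem k T : Set (Qk k)) := by
    intro s1 h1 s2 h2 heq
    rcases s1 with j1 | i1 <;> rcases s2 with j2 | i2
    · rw [aMap_inl, aMap_inl] at heq
      simpa using heq
    · rw [aMap_inl] at heq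
      have : j1 + 1 = i2 := by simpa [aMap] using heq
      simp only [Finset.mem_coe, mem_famElem_inl k T hT] at h1
      simp only [Finset.mem_coe, mem_famElem_inr] at h2
      exact absurd (this ▸ h2) h1
    · rw [aMap_inl] at heq
      have : j2 + 1 = i1 := by simpa [aMap] using heq.symm
      simp only [Finset.mem_coe, mem_famElem_inl k T hT] at h2
      simp only [Finset.mem_coe, mem_famElem_inr] at h1
      exact absurd (this ▸ h1) h2
    · simpa [aMap] using heq
  have hCk : (Ck k).card = k := by
    rw [Ck, Finset.card_image_of_injective _ Sum.inl_injective]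
    simp
  have hcard : (famElem k T).card = k := by
    rw [← Finset.card_image_of_injOn hinj, himg, hCk]
  refine ⟨himg, hcard, ?_⟩
  rw [hcard]
  simp only [Fintype.card_sum, Fintype.card_fin]
  omega

end PaperSync
end
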